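/- arXiv:2504.03204 — 4 statements merged into one kernel-verified Lean document; each statement's English description precedes it below -/
import Mathlib

section
/- For every B ∈ S^n, the cone J_0(B) = {X ∈ S^n_+ : ⟨B,X⟩ = 0} is ROG; that is, J_0(B) equals the convex hull of {x·xᵀ : x ∈ ℝ^n, xᵀ·B·x = 0}. -/
/-!
Write `q x = xᵀ B x`. A PSD matrix is a finite sum of terms `x xᵀ`, and `⟨B, ∑ x xᵀ⟩ = ∑ q x`.
If two terms `x`, `y` have `q`-values of opposite signs, the rotation
`(x, y) ↦ (cos t • x + sin t • y, -sin t • x + cos t • y)` preserves `x xᵀ + y yᵀ`, and by the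
intermediate value theorem some `t ∈ [0, π/2]` makes the first vector `B`-isotropic. Splitting off
that isotropic term and recursing on the remaining ones (whose `q`-values still sum to `0`) writes
the matrix as a sum of isotropic rank-one matrices; these form a cone, so sums of them lie in its
convex hull.
-/

open Matrix
open scoped Pointwise

theorem add_mem_convexHull_of_smul_mem {𝕜 E : Type*} [Field 𝕜] [LinearOrder 𝕜]
    [IsStrictOrderedRing 𝕜] [AddCommGroup E] [Module 𝕜 E] {s : Set E}
    (hs : ∀ c : 𝕜, 0 < c → ∀ x ∈ s, c • x ∈ s) {a b : E}
    (ha : a ∈ convexHull 𝕜 s) (hb : b ∈ convexHull 𝕜 s) : a + b ∈ convexHull 𝕜 s := by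
  have hdouble : ∀ z ∈ convexHull 𝕜 s, (2 : 𝕜) • z ∈ convexHull 𝕜 s := fun z hz => by
    have hs2 : (2 : 𝕜) • s ⊆ s := by
      rintro _ ⟨x, hx, rfl⟩
      exact hs 2 two_pos x hx
    exact convexHull_mono hs2 (convexHull_smul (2 : 𝕜) s ▸ Set.smul_mem_smul_set hz)
  have hmid := convex_convexHull 𝕜 s (hdouble a ha) (hdouble b hb)
    (by norm_num : (0 : 𝕜) ≤ 1 / 2) (by norm_num : (0 : 𝕜) ≤ 1 / 2) (by norm_num)
  simpa [smul_smul] using hmid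

namespace Matrix

theorem vecMulVec_rotate_add {ι R : Type*} [CommRing R] {a b : R} (hab : a ^ 2 + b ^ 2 = 1)
    (x y : ι → R) :
    vecMulVec (a • x + b • y) (a • x + b • y) + vecMulVec (-b • x + a • y) (-b • x + a • y) =
      vecMulVec x x + vecMulVec y y := by
  ext i j
  simp only [add_apply, vecMulVec_apply, Pi.add_apply, Pi.smul_apply, smul_eq_mul, neg_mul]
  linear_combination (x i * x j + y i * y j) * hab

variable {ι : Type*} [Fintype ι]

theorem trace_mul_vecMulVec_self {R : Type*} [CommRing R] (B : Matrix ι ι R) (x : ι → R) :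
    (B * vecMulVec x x).trace = x ⬝ᵥ B *ᵥ x := by
  rw [mul_vecMulVec, trace_vecMulVec, dotProduct_comm]

theorem exists_isotropic_vecMulVec_add_eq (B : Matrix ι ι ℝ) {x y : ι → ℝ}
    (hxy : (x ⬝ᵥ B *ᵥ x) * (y ⬝ᵥ B *ᵥ y) ≤ 0) :
    ∃ u v : ι → ℝ, u ⬝ᵥ B *ᵥ u = 0 ∧
      vecMulVec u u + vecMulVec v v = vecMulVec x x + vecMulVec y y := by
  let rot : ℝ → ι → ℝ := fun t => Real.cos t • x + Real.sin t • y
  have hcont : Continuous fun t => rot t ⬝ᵥ B *ᵥ rot t := by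
    unfold rot; fun_prop
  have hzero : (0 : ℝ) ∈
      Set.uIcc (rot 0 ⬝ᵥ B *ᵥ rot 0) (rot (Real.pi / 2) ⬝ᵥ B *ᵥ rot (Real.pi / 2)) := by
    simp only [rot, Real.cos_zero, Real.sin_zero, Real.cos_pi_div_two, Real.sin_pi_div_two,
      one_smul, zero_smul, add_zero, zero_add, Set.mem_uIcc]
    rcases mul_nonpos_iff.mp hxy with h | h
    exacts [Or.inr h.symm, Or.inl h]
  obtain ⟨t, -, ht⟩ := intermediate_value_uIcc hcont.continuousOn hzero
  exact ⟨rot t, -Real.sin t • x + Real.cos t • y, ht,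
    vecMulVec_rotate_add (Real.cos_sq_add_sin_sq t) x y⟩

def isotropicRankOne (B : Matrix ι ι ℝ) : Set (Matrix ι ι ℝ) :=
  {X | ∃ x : ι → ℝ, x ⬝ᵥ B *ᵥ x = 0 ∧ X = vecMulVec x x}

theorem smul_mem_isotropicRankOne {B : Matrix ι ι ℝ} {c : ℝ} (hc : 0 ≤ c) {X : Matrix ι ι ℝ}
    (hX : X ∈ isotropicRankOne B) : c • X ∈ isotropicRankOne B := by
  obtain ⟨x, hx, rfl⟩ := hX
  refine ⟨Real.sqrt c • x, ?_, ?_⟩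
  · simp [mulVec_smul, hx]
  · rw [smul_vecMulVec, vecMulVec_smul, smul_smul, Real.mul_self_sqrt hc]

theorem sum_map_vecMulVec_mem_convexHull (B : Matrix ι ι ℝ) (s : Multiset (ι → ℝ))
    (hs : (s.map fun x => x ⬝ᵥ B *ᵥ x).sum = 0) :
    (s.map fun x => vecMulVec x x).sum ∈ convexHull ℝ (isotropicRankOne B) := by
  have hadd {X Y : Matrix ι ι ℝ} : X ∈ convexHull ℝ (isotropicRankOne B) →
      Y ∈ convexHull ℝ (isotropicRankOne B) → X + Y ∈ convexHull ℝ (isotropicRankOne B) :=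
    add_mem_convexHull_of_smul_mem fun c hc _ hX => smul_mem_isotropicRankOne hc.le hX
  rcases Multiset.empty_or_exists_mem s with rfl | ⟨x, hx⟩
  · exact subset_convexHull ℝ _ ⟨0, by simp, by simp⟩
  obtain ⟨t, rfl⟩ := Multiset.exists_cons_of_mem hx
  simp only [Multiset.map_cons, Multiset.sum_cons] at hs ⊢
  by_cases hqx : x ⬝ᵥ B *ᵥ x = 0
  · exact hadd (subset_convexHull ℝ _ ⟨x, hqx, rfl⟩)
      (sum_map_vecMulVec_mem_convexHull B t (by linarith))
  obtain ⟨y, hy, hxy⟩ : ∃ y ∈ t, (x ⬝ᵥ B *ᵥ x) * (y ⬝ᵥ B *ᵥ y) < 0 := by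
    by_contra! h
    have hnonneg := Multiset.sum_nonneg (s := t.map fun y => (x ⬝ᵥ B *ᵥ x) * (y ⬝ᵥ B *ᵥ y))
      (by simpa using h)
    rw [Multiset.sum_map_mul_left, eq_neg_of_add_eq_zero_right hs] at hnonneg
    exact hqx (by nlinarith)
  obtain ⟨t', rfl⟩ := Multiset.exists_cons_of_mem hy
  obtain ⟨u, v, hu, huv⟩ := exists_isotropic_vecMulVec_add_eq B hxy.le
  have hquv : u ⬝ᵥ B *ᵥ u + v ⬝ᵥ B *ᵥ v = x ⬝ᵥ B *ᵥ x + y ⬝ᵥ B *ᵥ y := by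
    simpa [Matrix.mul_add, trace_add, trace_mul_vecMulVec_self] using
      congrArg (fun M => (B * M).trace) huv
  simp only [Multiset.map_cons, Multiset.sum_cons] at hs ⊢
  rw [← add_assoc, ← huv, add_assoc]
  refine hadd (subset_convexHull ℝ _ ⟨u, hu, rfl⟩) ?_
  simpa using sum_map_vecMulVec_mem_convexHull B (v ::ₘ t') (by simp; linarith)
termination_by Multiset.card s
decreasing_by all_goals subst_vars; simp

theorem sum_vecMulVec_mem_convexHull {κ : Type*} [Fintype κ] (B : Matrix ι ι ℝ)
    (v : κ → ι → ℝ) (hv : ∑ k, v k ⬝ᵥ B *ᵥ v k = 0) :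
    ∑ k, vecMulVec (v k) (v k) ∈ convexHull ℝ (isotropicRankOne B) := by
  have hmem := sum_map_vecMulVec_mem_convexHull B (Finset.univ.val.map v)
    (by simpa [Multiset.map_map, ← Finset.sum_eq_multiset_sum] using hv)
  simpa [Multiset.map_map, ← Finset.sum_eq_multiset_sum] using hmem

theorem convex_posSemidef_trace_mul_eq_zero (B : Matrix ι ι ℝ) :
    Convex ℝ {X : Matrix ι ι ℝ | X.PosSemidef ∧ (B * X).trace = 0} := by
  rintro X ⟨hX, hBX⟩ Y ⟨hY, hBY⟩ a b ha hb -
  exact ⟨(hX.smul ha).add (hY.smul hb), by simp [Matrix.mul_add, trace_add, hBX, hBY]⟩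

theorem convexHull_isotropicRankOne (B : Matrix ι ι ℝ) :
    convexHull ℝ (isotropicRankOne B) = {X | X.PosSemidef ∧ (B * X).trace = 0} := by
  refine subset_antisymm (convexHull_min ?_ (convex_posSemidef_trace_mul_eq_zero B)) ?_
  · rintro _ ⟨x, hx, rfl⟩
    exact ⟨by simpa using posSemidef_vecMulVec_self_star x, by rwa [trace_mul_vecMulVec_self]⟩
  · rintro X ⟨hX, hBX⟩
    obtain ⟨m, v, rfl⟩ := posSemidef_iff_eq_sum_vecMulVec.mp hX
    simp only [star_trivial] at hBX ⊢
    exact sum_vecMulVec_mem_convexHull B v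
      (by simpa [Matrix.mul_sum, trace_sum, trace_mul_vecMulVec_self] using hBX)

end Matrix

theorem stmt_12_general (n : ℕ) (B : Matrix (Fin n) (Fin n) ℝ) :
    {X : Matrix (Fin n) (Fin n) ℝ | X.PosSemidef ∧ (B * X).trace = 0} =
    convexHull ℝ {X | ∃ x : Fin n → ℝ,
      dotProduct x (B.mulVec x) = 0 ∧ X = vecMulVec x x} :=
  (Matrix.convexHull_isotropicRankOne B).symm

/-- for every symmetric `B`, the cone `J_0(B)` is ROG. -/
theorem stmt_12 (n : ℕ) (B : Matrix (Fin n) (Fin n) ℝ) (hBsym : B.IsSymm) :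
    {X : Matrix (Fin n) (Fin n) ℝ | X.PosSemidef ∧ (B * X).trace = 0} =
    convexHull ℝ {X | ∃ x : Fin n → ℝ,
      dotProduct x (B.mulVec x) = 0 ∧ X = vecMulVec x x} :=
  stmt_12_general n B
end

section
/- Let K ⊆ S^n_+ be a closed convex cone, let F_K be a face of K, let G be a convex cone with G ⊆ F_K, let H ∈ S^n, and let B^1, …, B^m ∈ S^n satisfy: (C2) for every k, J_0(B^k) ⊆ K and F_K ∩ J_0(B^k) ⊆ G; (C3) for all distinct k, l, F_K ∩ J_0(B^k) ⊆ J_+(B^l). Suppose X̄ ∈ G satisfies ⟨B^k, X̄⟩ ≥ 0 for all k ∈ {1,…,m}, ⟨H, X̄⟩ = 1, and ⟨B^p, X̄⟩ = 0 for some p ∈ {1,…,m}. Then there exists z ∈ ℝ^n such that z·zᵀ ∈ G, ⟨B^k, z·zᵀ⟩ ≥ 0 for all k ∈ {1,…,m}, and ⟨H, z·zᵀ⟩ = 1. -/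
/-!
Since `⟨B^p, X̄⟩ = 0`, the Sturm–Zhang rank-one decomposition writes `X̄ = ∑ zᵢ zᵢᵀ` with
`⟨B^p, zᵢ zᵢᵀ⟩ = 0` for every `i`: as long as some piece has `⟨B^p, ·⟩ ≠ 0`, a positive and a
negative piece can be rotated into each other until one of them becomes isotropic. Each `zᵢ zᵢᵀ`
and the remainder `X̄ - zᵢ zᵢᵀ` lie in `J_0(B^p) ⊆ K`, and they add up to `X̄ ∈ F_K`, so by the
face property `zᵢ zᵢᵀ ∈ F_K ∩ J_0(B^p)`, which lies in `G` by (C2) and in every `J_+(B^k)` by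
(C3). Since `⟨H, X̄⟩ = 1`, some piece has `⟨H, zᵢ zᵢᵀ⟩ > 0`; rescaling it gives `z`.
-/

open Matrix Real

namespace Matrix

variable {n : Type*}

lemma trace_mul_multiset_sum_map [Fintype n] {ι R : Type*} [NonUnitalNonAssocSemiring R]
    (B : Matrix n n R) (S : Multiset ι) (f : ι → Matrix n n R) :
    (B * (S.map f).sum).trace = (S.map fun i => (B * f i).trace).sum := by
  rw [← Multiset.sum_map_mul_left, trace_multiset_sum, Multiset.map_map]
  rfl

lemma posSemidef_vecMulVec_self [Fintype n] (z : n → ℝ) : (vecMulVec z z).PosSemidef := by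
  simpa using posSemidef_vecMulVec_self_star z

lemma vecMulVec_smul_self {R : Type*} [CommSemiring R] (c : R) (z : n → R) :
    vecMulVec (c • z) (c • z) = (c * c) • vecMulVec z z := by
  rw [smul_vecMulVec, vecMulVec_smul, smul_smul]

lemma vecMulVec_rotate_add_vecMulVec_rotate {R : Type*} [CommRing R] (a b : n → R) {c s : R}
    (h : c ^ 2 + s ^ 2 = 1) :
    vecMulVec (c • a + s • b) (c • a + s • b) + vecMulVec (s • a - c • b) (s • a - c • b) =
      vecMulVec a a + vecMulVec b b := by
  ext i j
  simp only [add_apply, vecMulVec_apply, Pi.add_apply, Pi.sub_apply, Pi.smul_apply, smul_eq_mul]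
  linear_combination (a i * a j + b i * b j) * h

lemma exists_rotate_trace_mul_vecMulVec_eq_zero [Fintype n] (B : Matrix n n ℝ) {a b : n → ℝ}
    (ha : 0 ≤ (B * vecMulVec a a).trace) (hb : (B * vecMulVec b b).trace ≤ 0) :
    ∃ u v : n → ℝ, (B * vecMulVec u u).trace = 0 ∧
      vecMulVec u u + vecMulVec v v = vecMulVec a a + vecMulVec b b := by
  let q : ℝ → ℝ := fun θ =>
    (B * vecMulVec (cos θ • a + sin θ • b) (cos θ • a + sin θ • b)).trace
  have hq : Continuous q := by fun_prop
  obtain ⟨θ, -, hθ⟩ := intermediate_value_Icc' pi_div_two_pos.le hq.continuousOn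
    ⟨by simpa [q] using hb, by simpa [q] using ha⟩
  exact ⟨_, _, hθ, vecMulVec_rotate_add_vecMulVec_rotate a b (cos_sq_add_sin_sq θ)⟩

theorem exists_vecMulVec_decomposition_of_sum_trace_eq_zero [Fintype n] (B : Matrix n n ℝ)
    (S : Multiset (n → ℝ)) (hS : (S.map fun z => (B * vecMulVec z z).trace).sum = 0) :
    ∃ T : Multiset (n → ℝ),
      (T.map fun z => vecMulVec z z).sum = (S.map fun z => vecMulVec z z).sum ∧
      ∀ w ∈ T, (B * vecMulVec w w).trace = 0 := by
  set q : (n → ℝ) → ℝ := fun z => (B * vecMulVec z z).trace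
  induction hN : S.card using Nat.strong_induction_on generalizing S with
  | _ N ih =>
  by_cases hneg : ∃ b ∈ S, q b < 0
  swap
  · push Not at hneg
    exact ⟨S, rfl, fun w hw => Multiset.all_zero_of_le_zero_le_of_sum_eq_zero
      (by simpa using hneg) hS _ (Multiset.mem_map_of_mem q hw)⟩
  obtain ⟨b, hbS, hb⟩ := hneg
  obtain ⟨R, rfl⟩ := Multiset.exists_cons_of_mem hbS
  obtain ⟨a, haR, ha⟩ : ∃ a ∈ R, 0 < q a := by
    by_contra! h
    have := Multiset.sum_map_le_sum_map q (fun _ => 0) h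
    simp only [Multiset.map_cons, Multiset.sum_cons, Multiset.map_const', Multiset.sum_replicate,
      smul_zero] at hS this
    linarith
  obtain ⟨R, rfl⟩ := Multiset.exists_cons_of_mem haR
  obtain ⟨u, v, hu, huv⟩ := exists_rotate_trace_mul_vecMulVec_eq_zero B ha.le hb.le
  have hquv : q u + q v = q a + q b := by
    simpa only [q, Matrix.mul_add, trace_add] using congrArg (fun X => (B * X).trace) huv
  obtain ⟨T, hT, hT0⟩ := ih (v ::ₘ R).card (by simp [← hN]) (v ::ₘ R)
    (by simp only [Multiset.map_cons, Multiset.sum_cons] at hS ⊢; linarith) rfl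
  refine ⟨u ::ₘ T, ?_, ?_⟩
  · simp only [Multiset.map_cons, Multiset.sum_cons] at hT ⊢
    rw [hT, ← add_assoc, huv]
    abel
  · simpa [hu] using hT0

theorem PosSemidef.exists_vecMulVec_decomposition [Fintype n] {X B : Matrix n n ℝ}
    (hX : X.PosSemidef) (hBX : (B * X).trace = 0) :
    ∃ T : Multiset (n → ℝ), (T.map fun z => vecMulVec z z).sum = X ∧
      ∀ w ∈ T, (B * vecMulVec w w).trace = 0 := by
  obtain ⟨r, v, rfl⟩ := posSemidef_iff_eq_sum_vecMulVec.mp hX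
  have hsum : ∑ i, vecMulVec (v i) (star (v i)) =
      ((Finset.univ.val.map v).map fun z => vecMulVec z z).sum := by
    simp [Finset.sum_eq_multiset_sum, Function.comp_def]
  rw [hsum, trace_mul_multiset_sum_map] at hBX
  rw [hsum]
  exact exists_vecMulVec_decomposition_of_sum_trace_eq_zero B _ hBX

lemma vecMulVec_mem_of_multiset_sum_mem_face [Fintype n] {K F : Set (Matrix n n ℝ)}
    {B : Matrix n n ℝ} (hJ₀ : {X | X.PosSemidef ∧ (B * X).trace = 0} ⊆ K)
    (hface : ∀ X ∈ K, ∀ Y ∈ K, X + Y ∈ F → X ∈ F ∧ Y ∈ F) {T : Multiset (n → ℝ)}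
    (hT : ∀ w ∈ T, (B * vecMulVec w w).trace = 0)
    (hTF : (T.map fun z => vecMulVec z z).sum ∈ F) {w : n → ℝ} (hw : w ∈ T) :
    vecMulVec w w ∈ F := by
  classical
  set Z := ((T.erase w).map fun z => vecMulVec z z).sum
  have hZ : Z.PosSemidef := Multiset.sum_induction _ _ (fun _ _ => PosSemidef.add)
    PosSemidef.zero (by simpa using fun z _ => posSemidef_vecMulVec_self z)
  have hBZ : (B * Z).trace = 0 := by
    rw [trace_mul_multiset_sum_map]
    exact Multiset.sum_eq_zero (by simpa using fun z hz => hT z (Multiset.mem_of_mem_erase hz))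
  rw [← Multiset.sum_map_erase hw] at hTF
  exact (hface _ (hJ₀ ⟨posSemidef_vecMulVec_self w, hT w hw⟩) _ (hJ₀ ⟨hZ, hBZ⟩) hTF).1

end Matrix

theorem stmt_16_general (n m : ℕ) (K FK G : Set (Matrix (Fin n) (Fin n) ℝ))
    (hKpsd : ∀ X ∈ K, X.PosSemidef)
    -- FK is a face of K
    (hFKsub : FK ⊆ K)
    (hFKface : ∀ X ∈ K, ∀ Y ∈ K, X + Y ∈ FK → X ∈ FK ∧ Y ∈ FK)
    -- G is a convex cone with G ⊆ FK
    (hGcone : ∀ (c : ℝ), 0 ≤ c → ∀ X ∈ G, c • X ∈ G)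
    (hGFK : G ⊆ FK)
    (H : Matrix (Fin n) (Fin n) ℝ)
    (B : Fin m → Matrix (Fin n) (Fin n) ℝ)
    -- (C2)
    (hC2 : ∀ k, {X : Matrix (Fin n) (Fin n) ℝ | X.PosSemidef ∧ (B k * X).trace = 0} ⊆ K ∧
      FK ∩ {X | X.PosSemidef ∧ (B k * X).trace = 0} ⊆ G)
    -- (C3)
    (hC3 : ∀ k l, k ≠ l →
      FK ∩ {X : Matrix (Fin n) (Fin n) ℝ | X.PosSemidef ∧ (B k * X).trace = 0} ⊆
      {X | X.PosSemidef ∧ 0 ≤ (B l * X).trace})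
    (Xb : Matrix (Fin n) (Fin n) ℝ) (hXbG : Xb ∈ G)
    (hXbH : (H * Xb).trace = 1)
    (p : Fin m) (hp : (B p * Xb).trace = 0) :
    ∃ z : Fin n → ℝ, vecMulVec z z ∈ G ∧ (∀ k, 0 ≤ (B k * vecMulVec z z).trace) ∧
      (H * vecMulVec z z).trace = 1 := by
  obtain ⟨T, rfl, hT⟩ := (hKpsd Xb (hFKsub (hGFK hXbG))).exists_vecMulVec_decomposition hp
  have hJ₀ : ∀ w ∈ T, vecMulVec w w ∈ FK ∩ {X | X.PosSemidef ∧ (B p * X).trace = 0} :=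
    fun w hw => ⟨vecMulVec_mem_of_multiset_sum_mem_face (hC2 p).1 hFKface hT (hGFK hXbG) hw,
      posSemidef_vecMulVec_self w, hT w hw⟩
  obtain ⟨w, hw, hHw⟩ : ∃ w ∈ T, 0 < (H * vecMulVec w w).trace := by
    by_contra! h
    have := Multiset.sum_map_le_sum_map _ (fun _ => 0) h
    simp only [← trace_mul_multiset_sum_map, hXbH, Multiset.map_const', Multiset.sum_replicate,
      smul_zero] at this
    linarith
  set c := (H * vecMulVec w w).trace
  have hz : vecMulVec ((√c)⁻¹ • w) ((√c)⁻¹ • w) = c⁻¹ • vecMulVec w w := by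
    rw [vecMulVec_smul_self, ← mul_inv, Real.mul_self_sqrt hHw.le]
  refine ⟨(√c)⁻¹ • w, ?_, fun k => ?_, ?_⟩ <;> rw [hz]
  · exact hGcone _ (inv_nonneg.mpr hHw.le) _ ((hC2 p).2 (hJ₀ w hw))
  · rw [Matrix.mul_smul, trace_smul, smul_eq_mul]
    obtain rfl | hkp := eq_or_ne p k
    · rw [(hJ₀ w hw).2.2, mul_zero]
    · exact mul_nonneg (inv_nonneg.mpr hHw.le) (hC3 p k hkp (hJ₀ w hw)).2
  · rw [Matrix.mul_smul, trace_smul, smul_eq_mul, inv_mul_cancel₀ hHw.ne']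

/-- case (i) in the proof of the main theorem. -/
theorem stmt_16 (n m : ℕ) (K FK G : Set (Matrix (Fin n) (Fin n) ℝ))
    (hKpsd : ∀ X ∈ K, X.PosSemidef) (hKclosed : IsClosed K) (hKconv : Convex ℝ K)
    (hKcone : ∀ (c : ℝ), 0 ≤ c → ∀ X ∈ K, c • X ∈ K)
    -- FK is a face of K
    (hFKsub : FK ⊆ K) (hFKconv : Convex ℝ FK)
    (hFKcone : ∀ (c : ℝ), 0 ≤ c → ∀ X ∈ FK, c • X ∈ FK)
    (hFKface : ∀ X ∈ K, ∀ Y ∈ K, X + Y ∈ FK → X ∈ FK ∧ Y ∈ FK)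
    -- G is a convex cone with G ⊆ FK
    (hGconv : Convex ℝ G) (hGcone : ∀ (c : ℝ), 0 ≤ c → ∀ X ∈ G, c • X ∈ G)
    (hGFK : G ⊆ FK)
    (H : Matrix (Fin n) (Fin n) ℝ) (hHsym : H.IsSymm)
    (B : Fin m → Matrix (Fin n) (Fin n) ℝ) (hBsym : ∀ k, (B k).IsSymm)
    -- (C2)
    (hC2 : ∀ k, {X : Matrix (Fin n) (Fin n) ℝ | X.PosSemidef ∧ (B k * X).trace = 0} ⊆ K ∧
      FK ∩ {X | X.PosSemidef ∧ (B k * X).trace = 0} ⊆ G)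
    -- (C3)
    (hC3 : ∀ k l, k ≠ l →
      FK ∩ {X : Matrix (Fin n) (Fin n) ℝ | X.PosSemidef ∧ (B k * X).trace = 0} ⊆
      {X | X.PosSemidef ∧ 0 ≤ (B l * X).trace})
    (Xb : Matrix (Fin n) (Fin n) ℝ) (hXbG : Xb ∈ G)
    (hXbB : ∀ k, 0 ≤ (B k * Xb).trace) (hXbH : (H * Xb).trace = 1)
    (p : Fin m) (hp : (B p * Xb).trace = 0) :
    ∃ z : Fin n → ℝ, vecMulVec z z ∈ G ∧ (∀ k, 0 ≤ (B k * vecMulVec z z).trace) ∧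
      (H * vecMulVec z z).trace = 1 :=
  stmt_16_general n m K FK G hKpsd hFKsub hFKface hGcone hGFK H B hC2 hC3 Xb hXbG hXbH p hp
end

section
/- Let n ≥ 3 and define B^1, B^2 ∈ S^n by their quadratic forms: xᵀ·B^1·x = −x_1·x_n + Σ_{i=2}^{n-1}(x_i − x_1)^2 + 2·x_n^2 and xᵀ·B^2·x = Σ_{i=1}^{n-1}(x_i − x_n)^2 − x_n^2 for every x ∈ ℝ^n. Then: (a) for k = 1, 2, every x ∈ ℝ^n with xᵀ·B^k·x = 0 satisfies x ∈ ℝ^n_+ ∪ (−ℝ^n_+), and consequently J_0(B^k) ⊆ CP^n; (b) J_0(B^1) ⊆ J_+(B^2) and J_0(B^2) ⊆ J_+(B^1). -/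
/-!
Every positive semidefinite `X` with `⟨B, X⟩ = 0` is a sum `∑ wᵢ wᵢᵀ` with `wᵢᵀ B wᵢ = 0` for
all `i`: start from any Gram decomposition; since `∑ vᵢᵀ B vᵢ = 0`, as long as some term is
nonzero there are two of opposite signs, and rotating that pair in its plane keeps
`vᵢ vᵢᵀ + vⱼ vⱼᵀ` and, by continuity, makes one of them isotropic. Hence `J₀(B) ⊆ CP` as soon as
every isotropic vector of `B` is sign-definite, and `J₀(A) ⊆ J₊(B)` as soon as `B` is
nonnegative on the isotropic vectors of `A`.

For the two forms of the example, every coordinate of an isotropic vector lies within `|c|` of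
a centre `c` (`c = x₁` for `B¹`, `c = xₙ` for `B²`), which forces a common sign. On the zeros of
`B¹` one has `xₙ (x₁ - 2xₙ) ≥ 0` and on those of `B²` one has `x₁ (x₁ - 2xₙ) ≤ 0`; together with
`(x₁ - 2xₙ)² ≥ 0` this gives the two cross inequalities.
-/

open Matrix

noncomputable section

def CP (n : ℕ) : Set (Matrix (Fin n) (Fin n) ℝ) :=
  convexHull ℝ {X | ∃ x : Fin n → ℝ, 0 ≤ x ∧ X = vecMulVec x x}

open Finset
open scoped Pointwise

theorem Fintype.sum_eq_sum_of_eq_off_pair {ι M : Type*} [Fintype ι] [AddCommGroup M]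
    {f g : ι → M} {i j : ι} (hij : i ≠ j) (hfg : ∀ k, k ≠ i → k ≠ j → f k = g k)
    (hpair : f i + f j = g i + g j) : ∑ k, f k = ∑ k, g k := by
  rw [← sub_eq_zero, ← sum_sub_distrib,
    Fintype.sum_eq_add i j hij fun k hk => sub_eq_zero.2 (hfg k hk.1 hk.2),
    sub_add_sub_comm, hpair, sub_self]

theorem Matrix.vecMulVec_rotate_add_s17 {n : Type*} {c s : ℝ} (h : c ^ 2 + s ^ 2 = 1) (x y : n → ℝ) :
    vecMulVec (c • x + s • y) (c • x + s • y) + vecMulVec (-s • x + c • y) (-s • x + c • y) =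
      vecMulVec x x + vecMulVec y y := by
  ext a b
  simp only [add_apply, vecMulVec_apply, Pi.add_apply, Pi.smul_apply, smul_eq_mul]
  linear_combination (x a * x b + y a * y b) * h

section IsotropicDecomposition

variable {n : Type*} [Fintype n]

theorem Matrix.trace_mul_vecMulVec_self_s17 (B : Matrix n n ℝ) (v : n → ℝ) :
    (B * vecMulVec v v).trace = v ⬝ᵥ B *ᵥ v := by
  rw [mul_vecMulVec, trace_vecMulVec, dotProduct_comm]

theorem Matrix.trace_mul_sum_vecMulVec_self {ι : Type*} (B : Matrix n n ℝ) (s : Finset ι)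
    (v : ι → n → ℝ) : (B * ∑ i ∈ s, vecMulVec (v i) (v i)).trace = ∑ i ∈ s, v i ⬝ᵥ B *ᵥ v i := by
  simp only [mul_sum, trace_sum, trace_mul_vecMulVec_self_s17]

theorem Matrix.PosSemidef.exists_eq_sum_vecMulVec_self {X : Matrix n n ℝ} (hX : X.PosSemidef) :
    ∃ v : n → n → ℝ, X = ∑ i, vecMulVec (v i) (v i) := by
  classical
  obtain ⟨C, rfl⟩ : ∃ C : Matrix n n ℝ, X = Cᴴ * C := by
    open scoped MatrixOrder in exact CStarAlgebra.nonneg_iff_eq_star_mul_self.mp hX.nonneg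
  refine ⟨fun i => C i, ?_⟩
  ext a b
  simp [mul_apply, vecMulVec_apply, sum_apply]

theorem Matrix.exists_rotate_dotProduct_mulVec_eq_zero (B : Matrix n n ℝ) {x y : n → ℝ}
    (hxy : (x ⬝ᵥ B *ᵥ x) * (y ⬝ᵥ B *ᵥ y) ≤ 0) :
    ∃ c s : ℝ, c ^ 2 + s ^ 2 = 1 ∧ (c • x + s • y) ⬝ᵥ B *ᵥ (c • x + s • y) = 0 := by
  set f : ℝ → ℝ := fun θ =>
    (Real.cos θ • x + Real.sin θ • y) ⬝ᵥ B *ᵥ (Real.cos θ • x + Real.sin θ • y)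
  have hf : Continuous f := by fun_prop
  have h0 : 0 ∈ Set.uIcc (f 0) (f (Real.pi / 2)) := by
    simp only [f, Real.cos_zero, Real.sin_zero, Real.cos_pi_div_two, Real.sin_pi_div_two,
      one_smul, zero_smul, add_zero, zero_add, Set.mem_uIcc]
    rcases mul_nonpos_iff.1 hxy with h | h
    · exact Or.inr ⟨h.2, h.1⟩
    · exact Or.inl ⟨h.1, h.2⟩
  obtain ⟨θ, -, hθ⟩ := intermediate_value_uIcc hf.continuousOn h0
  exact ⟨Real.cos θ, Real.sin θ, Real.cos_sq_add_sin_sq θ, hθ⟩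


variable {ι : Type*} [Fintype ι] [DecidableEq ι]

theorem Matrix.exists_sum_vecMulVec_eq_of_sum_dotProduct_mulVec_eq_zero (B : Matrix n n ℝ)
    (v : ι → n → ℝ) (hsum : ∑ i, v i ⬝ᵥ B *ᵥ v i = 0) (hne : ∃ i, v i ⬝ᵥ B *ᵥ v i ≠ 0) :
    ∃ w : ι → n → ℝ, ∑ i, vecMulVec (w i) (w i) = ∑ i, vecMulVec (v i) (v i) ∧
      #{i | w i ⬝ᵥ B *ᵥ w i ≠ 0} < #{i | v i ⬝ᵥ B *ᵥ v i ≠ 0} := by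
  set q : (n → ℝ) → ℝ := fun x => x ⬝ᵥ B *ᵥ x
  obtain ⟨i₀, hi₀⟩ := hne
  obtain ⟨i, -, hi⟩ : ∃ i ∈ univ, 0 < q (v i) :=
    exists_pos_of_sum_zero_of_exists_nonzero _ hsum ⟨i₀, mem_univ _, hi₀⟩
  obtain ⟨j, -, hj⟩ : ∃ j ∈ univ, 0 < -q (v j) :=
    exists_pos_of_sum_zero_of_exists_nonzero _ (by rw [sum_neg_distrib, hsum, neg_zero])
      ⟨i₀, mem_univ _, neg_ne_zero.2 hi₀⟩
  have hij : i ≠ j := by rintro rfl; linarith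
  obtain ⟨c, s, hcs, hzero⟩ :=
    exists_rotate_dotProduct_mulVec_eq_zero B (mul_nonpos_of_nonneg_of_nonpos hi.le (by linarith))
  set w := Function.update (Function.update v i (c • v i + s • v j)) j (-s • v i + c • v j)
  have hwi : w i = c • v i + s • v j := by simp [w, hij]
  have hwj : w j = -s • v i + c • v j := by simp [w]
  have hw : ∀ k, k ≠ i → k ≠ j → w k = v k := fun k hki hkj => by simp [w, hki, hkj]
  have hqwi : q (w i) = 0 := by rw [hwi]; exact hzero
  refine ⟨w, ?_, card_lt_card <| (ssubset_iff_of_subset fun k hk => ?_).2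
    ⟨i, by simpa using hi.ne', by simpa using hqwi⟩⟩
  · refine Fintype.sum_eq_sum_of_eq_off_pair hij (fun k hki hkj => by rw [hw k hki hkj]) ?_
    rw [hwi, hwj, vecMulVec_rotate_add_s17 hcs]
  · simp only [mem_filter, mem_univ, true_and] at hk ⊢
    by_cases hki : k = i
    · exact (hk (hki ▸ hqwi)).elim
    by_cases hkj : k = j
    · subst hkj; linarith
    · rwa [hw k hki hkj] at hk

theorem Matrix.exists_sum_vecMulVec_isotropic_of_trace_mul_eq_zero (B : Matrix n n ℝ)
    {X : Matrix n n ℝ} (hBX : (B * X).trace = 0) (v : ι → n → ℝ)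
    (hv : X = ∑ i, vecMulVec (v i) (v i)) :
    ∃ w : ι → n → ℝ, X = ∑ i, vecMulVec (w i) (w i) ∧ ∀ i, w i ⬝ᵥ B *ᵥ w i = 0 := by
  induction hk : #{i | v i ⬝ᵥ B *ᵥ v i ≠ 0} using Nat.strong_induction_on generalizing v with
  | _ k ih =>
    subst hk
    by_cases hall : ∀ i, v i ⬝ᵥ B *ᵥ v i = 0
    · exact ⟨v, hv, hall⟩
    have hsum : ∑ i, v i ⬝ᵥ B *ᵥ v i = 0 := by rwa [hv, trace_mul_sum_vecMulVec_self] at hBX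
    obtain ⟨w, hwv, hbad⟩ :=
      exists_sum_vecMulVec_eq_of_sum_dotProduct_mulVec_eq_zero B v hsum (not_forall.1 hall)
    exact ih _ hbad w (hv.trans hwv.symm) rfl

end IsotropicDecomposition

section CompletelyPositive

variable {k : ℕ}

theorem vecMulVec_self_mem_CP {x : Fin k → ℝ} (hx : 0 ≤ x ∨ x ≤ 0) : vecMulVec x x ∈ CP k := by
  refine subset_convexHull ℝ _ ?_
  rcases hx with hx | hx
  · exact ⟨x, hx, rfl⟩
  · exact ⟨-x, neg_nonneg.2 hx, by rw [neg_vecMulVec, vecMulVec_neg, neg_neg]⟩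

theorem smul_mem_CP {t : ℝ} (ht : 0 ≤ t) {X : Matrix (Fin k) (Fin k) ℝ} (hX : X ∈ CP k) :
    t • X ∈ CP k := by
  have hgen : t • {X | ∃ x : Fin k → ℝ, 0 ≤ x ∧ X = vecMulVec x x} ⊆
      {X | ∃ x : Fin k → ℝ, 0 ≤ x ∧ X = vecMulVec x x} := by
    rintro _ ⟨_, ⟨x, hx, rfl⟩, rfl⟩
    refine ⟨√t • x, smul_nonneg (Real.sqrt_nonneg t) hx, ?_⟩
    rw [smul_vecMulVec, vecMulVec_smul, smul_smul, Real.mul_self_sqrt ht]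
  have htX : t • X ∈ t • CP k := Set.smul_mem_smul_set hX
  rw [CP, ← convexHull_smul] at htX
  exact convexHull_mono hgen htX

theorem add_mem_CP {X Y : Matrix (Fin k) (Fin k) ℝ} (hX : X ∈ CP k) (hY : Y ∈ CP k) :
    X + Y ∈ CP k := by
  have hmid := convex_convexHull ℝ _ hX hY (by norm_num : (0 : ℝ) ≤ 1 / 2)
    (by norm_num : (0 : ℝ) ≤ 1 / 2) (by norm_num)
  convert smul_mem_CP (by norm_num : (0 : ℝ) ≤ 2) hmid using 1
  rw [smul_add, smul_smul, smul_smul]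
  norm_num

theorem sum_vecMulVec_self_mem_CP {ι : Type*} (s : Finset ι) (u : ι → Fin k → ℝ)
    (hu : ∀ i ∈ s, 0 ≤ u i ∨ u i ≤ 0) : ∑ i ∈ s, vecMulVec (u i) (u i) ∈ CP k := by
  refine sum_induction _ (· ∈ CP k) (fun _ _ => add_mem_CP) ?_
    fun i hi => vecMulVec_self_mem_CP (hu i hi)
  simpa using vecMulVec_self_mem_CP (x := 0) (Or.inl le_rfl)

end CompletelyPositive

def Jzero {n : Type*} [Fintype n] (B : Matrix n n ℝ) : Set (Matrix n n ℝ) :=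
  {X | X.PosSemidef ∧ (B * X).trace = 0}

def Jplus {n : Type*} [Fintype n] (B : Matrix n n ℝ) : Set (Matrix n n ℝ) :=
  {X | X.PosSemidef ∧ 0 ≤ (B * X).trace}

theorem exists_sum_vecMulVec_isotropic_of_mem_Jzero {n : Type*} [Fintype n] {B X : Matrix n n ℝ}
    (hX : X ∈ Jzero B) :
    ∃ w : n → n → ℝ, X = ∑ i, vecMulVec (w i) (w i) ∧ ∀ i, w i ⬝ᵥ B *ᵥ w i = 0 := by
  classical
  obtain ⟨v, hv⟩ := hX.1.exists_eq_sum_vecMulVec_self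
  exact exists_sum_vecMulVec_isotropic_of_trace_mul_eq_zero B hX.2 v hv

theorem Jzero_subset_CP {k : ℕ} {B : Matrix (Fin k) (Fin k) ℝ}
    (hB : ∀ x, x ⬝ᵥ B *ᵥ x = 0 → 0 ≤ x ∨ x ≤ 0) : Jzero B ⊆ CP k := by
  intro X hX
  obtain ⟨w, rfl, hw⟩ := exists_sum_vecMulVec_isotropic_of_mem_Jzero hX
  exact sum_vecMulVec_self_mem_CP _ w fun i _ => hB _ (hw i)

theorem Jzero_subset_Jplus {n : Type*} [Fintype n] {A B : Matrix n n ℝ}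
    (hAB : ∀ x, x ⬝ᵥ A *ᵥ x = 0 → 0 ≤ x ⬝ᵥ B *ᵥ x) : Jzero A ⊆ Jplus B := by
  intro X hX
  obtain ⟨w, hXw, hw⟩ := exists_sum_vecMulVec_isotropic_of_mem_Jzero hX
  refine ⟨hX.1, ?_⟩
  rw [hXw, trace_mul_sum_vecMulVec_self]
  exact sum_nonneg fun i _ => hAB _ (hw i)

theorem nonneg_or_nonpos_of_forall_sq_sub_le {ι : Type*} {x : ι → ℝ} (c : ℝ)
    (h : ∀ i, (x i - c) ^ 2 ≤ c ^ 2) : 0 ≤ x ∨ x ≤ 0 := by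
  rcases le_total 0 c with hc | hc
  · exact Or.inl fun i => show 0 ≤ x i by nlinarith [h i]
  · exact Or.inr fun i => show x i ≤ 0 by nlinarith [h i]

section Example

variable {ι : Type*} [Fintype ι] [DecidableEq ι]

def quadB₁ (p l : ι) (x : ι → ℝ) : ℝ :=
  -(x p * x l) + (∑ i ∈ univ \ {p, l}, (x i - x p) ^ 2) + 2 * (x l) ^ 2

def quadB₂ (l : ι) (x : ι → ℝ) : ℝ :=
  (∑ i ∈ univ \ {l}, (x i - x l) ^ 2) - (x l) ^ 2

theorem sq_sub_le_of_quadB₁_eq_zero {p l : ι} {x : ι → ℝ} (h : quadB₁ p l x = 0) (i : ι) :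
    (x i - x p) ^ 2 ≤ x p ^ 2 := by
  set S := ∑ i ∈ univ \ {p, l}, (x i - x p) ^ 2
  have hS : 0 ≤ S := sum_nonneg fun _ _ => sq_nonneg _
  have hpl : x p * x l = S + 2 * x l ^ 2 := by unfold quadB₁ at h; linarith
  by_cases hip : i = p
  · subst hip; nlinarith
  by_cases hil : i = l
  · subst hil; nlinarith
  have hi : (x i - x p) ^ 2 ≤ S :=
    single_le_sum (f := fun j => (x j - x p) ^ 2) (fun _ _ => sq_nonneg _) (by simp [hip, hil])
  nlinarith [sq_nonneg (x p - x l), sq_nonneg (x l)]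

theorem sq_sub_le_of_quadB₂_eq_zero {l : ι} {x : ι → ℝ} (h : quadB₂ l x = 0) (i : ι) :
    (x i - x l) ^ 2 ≤ x l ^ 2 := by
  by_cases hil : i = l
  · subst hil; simp [sq_nonneg]
  have hi := single_le_sum (f := fun j => (x j - x l) ^ 2) (fun _ _ => sq_nonneg _)
    (show i ∈ univ \ {l} by simp [hil])
  unfold quadB₂ at h
  linarith

theorem sq_sub_le_quadB₂_add_sq {p l : ι} (hpl : p ≠ l) (x : ι → ℝ) :
    (x p - x l) ^ 2 ≤ quadB₂ l x + x l ^ 2 := by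
  have := single_le_sum (f := fun j => (x j - x l) ^ 2) (fun _ _ => sq_nonneg _)
    (show p ∈ univ \ {l} by simp [hpl])
  unfold quadB₂
  linarith

theorem quadB₂_nonneg_of_quadB₁_eq_zero {p l : ι} (hpl : p ≠ l) {x : ι → ℝ}
    (h : quadB₁ p l x = 0) : 0 ≤ quadB₂ l x := by
  have hS : 0 ≤ ∑ i ∈ univ \ {p, l}, (x i - x p) ^ 2 := sum_nonneg fun _ _ => sq_nonneg _
  have hl : 0 ≤ x l * (x p - 2 * x l) := by unfold quadB₁ at h; linarith
  nlinarith [sq_sub_le_quadB₂_add_sq hpl x, sq_nonneg (x p - 2 * x l)]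

theorem quadB₁_nonneg_of_quadB₂_eq_zero {p l : ι} (hpl : p ≠ l) {x : ι → ℝ}
    (h : quadB₂ l x = 0) : 0 ≤ quadB₁ p l x := by
  have hS : 0 ≤ ∑ i ∈ univ \ {p, l}, (x i - x p) ^ 2 := sum_nonneg fun _ _ => sq_nonneg _
  have hp : x p * (x p - 2 * x l) ≤ 0 := by nlinarith [sq_sub_le_quadB₂_add_sq hpl x]
  unfold quadB₁
  nlinarith [sq_nonneg (x p - 2 * x l)]

end Example

theorem stmt_17_general (m : ℕ) (B1 B2 : Matrix (Fin (m+3)) (Fin (m+3)) ℝ)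
    (hB1 : ∀ x : Fin (m+3) → ℝ, dotProduct x (B1.mulVec x) =
      -(x 0 * x (Fin.last (m+2))) +
      (∑ i ∈ Finset.univ \ {0, Fin.last (m+2)}, (x i - x 0) ^ 2) +
      2 * (x (Fin.last (m+2))) ^ 2)
    (hB2 : ∀ x : Fin (m+3) → ℝ, dotProduct x (B2.mulVec x) =
      (∑ i ∈ Finset.univ \ {Fin.last (m+2)}, (x i - x (Fin.last (m+2))) ^ 2) -
      (x (Fin.last (m+2))) ^ 2) :
    ((∀ x : Fin (m+3) → ℝ, dotProduct x (B1.mulVec x) = 0 → (0 ≤ x ∨ x ≤ 0)) ∧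
     (∀ x : Fin (m+3) → ℝ, dotProduct x (B2.mulVec x) = 0 → (0 ≤ x ∨ x ≤ 0)) ∧
     {X : Matrix (Fin (m+3)) (Fin (m+3)) ℝ | X.PosSemidef ∧ (B1 * X).trace = 0} ⊆ CP (m+3) ∧
     {X : Matrix (Fin (m+3)) (Fin (m+3)) ℝ | X.PosSemidef ∧ (B2 * X).trace = 0} ⊆ CP (m+3)) ∧
    ({X : Matrix (Fin (m+3)) (Fin (m+3)) ℝ | X.PosSemidef ∧ (B1 * X).trace = 0} ⊆
        {X | X.PosSemidef ∧ 0 ≤ (B2 * X).trace} ∧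
     {X : Matrix (Fin (m+3)) (Fin (m+3)) ℝ | X.PosSemidef ∧ (B2 * X).trace = 0} ⊆
        {X | X.PosSemidef ∧ 0 ≤ (B1 * X).trace}) := by
  have hq₁ : ∀ x, x ⬝ᵥ B1 *ᵥ x = quadB₁ 0 (Fin.last (m+2)) x := hB1
  have hq₂ : ∀ x, x ⬝ᵥ B2 *ᵥ x = quadB₂ (Fin.last (m+2)) x := hB2
  have hpl : (0 : Fin (m+3)) ≠ Fin.last (m+2) := Fin.last_pos.ne
  have sign₁ : ∀ x, x ⬝ᵥ B1 *ᵥ x = 0 → 0 ≤ x ∨ x ≤ 0 := fun x hx =>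
    nonneg_or_nonpos_of_forall_sq_sub_le _ (sq_sub_le_of_quadB₁_eq_zero (hq₁ x ▸ hx))
  have sign₂ : ∀ x, x ⬝ᵥ B2 *ᵥ x = 0 → 0 ≤ x ∨ x ≤ 0 := fun x hx =>
    nonneg_or_nonpos_of_forall_sq_sub_le _ (sq_sub_le_of_quadB₂_eq_zero (hq₂ x ▸ hx))
  refine ⟨⟨sign₁, sign₂, Jzero_subset_CP sign₁, Jzero_subset_CP sign₂⟩,
    Jzero_subset_Jplus fun x hx => ?_, Jzero_subset_Jplus fun x hx => ?_⟩
  · rw [hq₂]; exact quadB₂_nonneg_of_quadB₁_eq_zero hpl (hq₁ x ▸ hx)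
  · rw [hq₁]; exact quadB₁_nonneg_of_quadB₂_eq_zero hpl (hq₂ x ▸ hx)

/-- Example 5.1.  The matrix size is `n = m+3 ≥ 3`; the index `1`
of the paper corresponds to `0 : Fin (m+3)` and the index `n` to `Fin.last (m+2)`;
the sums are over `i = 2, …, n−1` and `i = 1, …, n−1` respectively. -/
theorem stmt_17 (m : ℕ) (B1 B2 : Matrix (Fin (m+3)) (Fin (m+3)) ℝ)
    (hB1sym : B1.IsSymm) (hB2sym : B2.IsSymm)
    (hB1 : ∀ x : Fin (m+3) → ℝ, dotProduct x (B1.mulVec x) =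
      -(x 0 * x (Fin.last (m+2))) +
      (∑ i ∈ Finset.univ \ {0, Fin.last (m+2)}, (x i - x 0) ^ 2) +
      2 * (x (Fin.last (m+2))) ^ 2)
    (hB2 : ∀ x : Fin (m+3) → ℝ, dotProduct x (B2.mulVec x) =
      (∑ i ∈ Finset.univ \ {Fin.last (m+2)}, (x i - x (Fin.last (m+2))) ^ 2) -
      (x (Fin.last (m+2))) ^ 2) :
    ((∀ x : Fin (m+3) → ℝ, dotProduct x (B1.mulVec x) = 0 → (0 ≤ x ∨ x ≤ 0)) ∧
     (∀ x : Fin (m+3) → ℝ, dotProduct x (B2.mulVec x) = 0 → (0 ≤ x ∨ x ≤ 0)) ∧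
     {X : Matrix (Fin (m+3)) (Fin (m+3)) ℝ | X.PosSemidef ∧ (B1 * X).trace = 0} ⊆ CP (m+3) ∧
     {X : Matrix (Fin (m+3)) (Fin (m+3)) ℝ | X.PosSemidef ∧ (B2 * X).trace = 0} ⊆ CP (m+3)) ∧
    ({X : Matrix (Fin (m+3)) (Fin (m+3)) ℝ | X.PosSemidef ∧ (B1 * X).trace = 0} ⊆
        {X | X.PosSemidef ∧ 0 ≤ (B2 * X).trace} ∧
     {X : Matrix (Fin (m+3)) (Fin (m+3)) ℝ | X.PosSemidef ∧ (B2 * X).trace = 0} ⊆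
        {X | X.PosSemidef ∧ 0 ≤ (B1 * X).trace}) :=
  stmt_17_general m B1 B2 hB1 hB2
end
end

section
/- Let Q ∈ S^n satisfy min{Q_{ij} : 1 ≤ i, j ≤ n} = min{Q_{kk} : 1 ≤ k ≤ n} (the minimum entry of Q is attained on the diagonal), and let e ∈ ℝ^n be the all-ones vector. Then inf{⟨Q,X⟩ : X ∈ DN^n, ⟨e·eᵀ, X⟩ = 1} = inf{xᵀ·Q·x : x ∈ ℝ^n_+, eᵀ·x = 1}; that is, the doubly nonnegative programming relaxation of the standard quadratic optimization problem over the simplex is exact for such Q. -/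
/-!
Every point `x` of the simplex yields the feasible doubly nonnegative matrix `x xᵀ` with the same
objective value, so the DNN bound never exceeds the StQP value. Conversely, if no entry of `Q` is
below `Q k k`, then `⟨Q, X⟩ ≥ Q k k · ⟨e eᵀ, X⟩ = Q k k` for every entrywise nonnegative feasible
`X`, and the vertex `e_k` of the simplex attains `Q k k`.
-/

open Matrix

noncomputable section

/-- The doubly nonnegative cone `DN^n = S^n_+ ∩ N^n`. -/
def DN (n : ℕ) : Set (Matrix (Fin n) (Fin n) ℝ) :=
  {X | X.PosSemidef ∧ ∀ i j, 0 ≤ X i j}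

section

variable {ι R : Type*} [Fintype ι]

theorem Matrix.trace_mul_nonneg_of_entries_nonneg [Semiring R] [PartialOrder R] [IsOrderedRing R]
    {A B : Matrix ι ι R} (hA : ∀ i j, 0 ≤ A i j) (hB : ∀ i j, 0 ≤ B i j) :
    0 ≤ (A * B).trace :=
  Finset.sum_nonneg fun i _ => Finset.sum_nonneg fun j _ => mul_nonneg (hA i j) (hB j i)

theorem Matrix.mul_trace_allOnes_mul_le_trace_mul [CommRing R] [PartialOrder R] [IsOrderedRing R]
    {Q X : Matrix ι ι R} {m : R} (hQ : ∀ i j, m ≤ Q i j) (hX : ∀ i j, 0 ≤ X i j) :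
    m * (vecMulVec (fun _ => (1 : R)) (fun _ => (1 : R)) * X).trace ≤ (Q * X).trace := by
  have h := trace_mul_nonneg_of_entries_nonneg
    (A := Q - m • vecMulVec (fun _ => (1 : R)) (fun _ => (1 : R)))
    (fun i j => by simpa [vecMulVec_apply] using hQ i j) hX
  rwa [sub_mul, trace_sub, smul_mul, trace_smul, smul_eq_mul, sub_nonneg] at h

theorem Matrix.trace_mul_vecMulVec_self_s19 [CommSemiring R] (Q : Matrix ι ι R) (x : ι → R) :
    (Q * vecMulVec x x).trace = x ⬝ᵥ Q *ᵥ x := by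
  rw [mul_vecMulVec, trace_vecMulVec, dotProduct_comm]

end

theorem vecMulVec_self_mem_DN {n : ℕ} {x : Fin n → ℝ} (hx : 0 ≤ x) : vecMulVec x x ∈ DN n :=
  ⟨by simpa using posSemidef_vecMulVec_self_star x, fun i j => mul_nonneg (hx i) (hx j)⟩

def stqpValue {n : ℕ} (Q : Matrix (Fin n) (Fin n) ℝ) : EReal :=
  sInf ((fun x : Fin n → ℝ => ((dotProduct x (Q.mulVec x) : ℝ) : EReal)) ''
    {x | 0 ≤ x ∧ dotProduct (fun _ => (1 : ℝ)) x = 1})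

def dnnValue {n : ℕ} (Q : Matrix (Fin n) (Fin n) ℝ) : EReal :=
  sInf ((fun X : Matrix (Fin n) (Fin n) ℝ => (((Q * X).trace : ℝ) : EReal)) ''
    {X | X ∈ DN n ∧ ((vecMulVec (fun _ => (1 : ℝ)) (fun _ => (1 : ℝ))) * X).trace = 1})

theorem dnnValue_le_stqpValue {n : ℕ} (Q : Matrix (Fin n) (Fin n) ℝ) :
    dnnValue Q ≤ stqpValue Q := by
  refine sInf_le_sInf ?_
  rintro _ ⟨x, ⟨hx, hsum⟩, rfl⟩
  refine ⟨vecMulVec x x, ⟨vecMulVec_self_mem_DN hx, ?_⟩, by simp only [trace_mul_vecMulVec_self_s19]⟩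
  rw [vecMulVec_mul_vecMulVec, hsum, one_smul, trace_vecMulVec, hsum]

theorem stqpValue_le_diag {n : ℕ} (Q : Matrix (Fin n) (Fin n) ℝ) (k : Fin n) :
    stqpValue Q ≤ Q k k := by
  refine sInf_le ⟨Pi.single k 1, ⟨Pi.single_nonneg.2 zero_le_one, ?_⟩, ?_⟩ <;> simp

theorem le_dnnValue_of_le_entries {n : ℕ} {Q : Matrix (Fin n) (Fin n) ℝ} {m : ℝ}
    (hQ : ∀ i j, m ≤ Q i j) : (m : EReal) ≤ dnnValue Q := by
  refine le_sInf ?_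
  rintro _ ⟨X, ⟨⟨-, hX⟩, hsum⟩, rfl⟩
  exact EReal.coe_le_coe_iff.2 <| by
    simpa [hsum] using mul_trace_allOnes_mul_le_trace_mul hQ hX

theorem stmt_19_general (n : ℕ) (Q : Matrix (Fin n) (Fin n) ℝ)
    (hmin : ∃ k : Fin n, ∀ i j, Q k k ≤ Q i j) :
    sInf ((fun X : Matrix (Fin n) (Fin n) ℝ => (((Q * X).trace : ℝ) : EReal)) ''
      {X | X ∈ DN n ∧
        ((vecMulVec (fun _ => (1 : ℝ)) (fun _ => (1 : ℝ))) * X).trace = 1}) =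
    sInf ((fun x : Fin n → ℝ => ((dotProduct x (Q.mulVec x) : ℝ) : EReal)) ''
      {x | 0 ≤ x ∧ dotProduct (fun _ => (1 : ℝ)) x = 1}) := by
  obtain ⟨k, hk⟩ := hmin
  exact le_antisymm (dnnValue_le_stqpValue Q)
    ((stqpValue_le_diag Q k).trans (le_dnnValue_of_le_entries hk))

/-- Gökmen–Yildirim: if the minimum entry of `Q` is attained on
the diagonal, the DNN relaxation of the standard quadratic optimization problem
over the simplex is exact.  Infima are taken in `EReal`. -/
theorem stmt_19 (n : ℕ) (Q : Matrix (Fin n) (Fin n) ℝ) (hQsym : Q.IsSymm)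
    (hmin : ∃ k : Fin n, ∀ i j, Q k k ≤ Q i j) :
    sInf ((fun X : Matrix (Fin n) (Fin n) ℝ => (((Q * X).trace : ℝ) : EReal)) ''
      {X | X ∈ DN n ∧
        ((vecMulVec (fun _ => (1 : ℝ)) (fun _ => (1 : ℝ))) * X).trace = 1}) =
    sInf ((fun x : Fin n → ℝ => ((dotProduct x (Q.mulVec x) : ℝ) : EReal)) ''
      {x | 0 ≤ x ∧ dotProduct (fun _ => (1 : ℝ)) x = 1}) :=
  stmt_19_general n Q hmin
end
end
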